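/- arXiv:1607.00682 — 5 statements merged into one kernel-verified Lean document; each statement's English description precedes it below -/
import Mathlib

section
/- For a measurable function u0 : ℝ^ℓ → ℝ, the condition that (p_t * |u0|)(x) < ∞ for all t > 0 and all x ∈ ℝ^ℓ (where p_t is the ℓ-dimensional heat kernel) holds if and only if ∫_{ℝ^ℓ} e^{-κ|x|²} |u0(x)| dx < ∞ for every κ > 0. -/
open MeasureTheory Real

/-- The heat-kernel integrability condition `(p_t * |u0|)(x) < ∞` for all `t > 0`,
`x ∈ ℝ^ℓ` is equivalent to `∫ e^{-κ|x|²} |u0(x)| dx < ∞` for every `κ > 0`. -/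
theorem stmt_0 (ℓ : ℕ) (u0 : EuclideanSpace ℝ (Fin ℓ) → ℝ) (hu0 : Measurable u0) :
    (∀ t : ℝ, 0 < t → ∀ x : EuclideanSpace ℝ (Fin ℓ),
      (∫⁻ y, ENNReal.ofReal ((2 * π * t) ^ (-(ℓ : ℝ) / 2) *
        Real.exp (-‖x - y‖ ^ 2 / (2 * t)) * |u0 y|)) < ⊤) ↔
    (∀ κ : ℝ, 0 < κ →
      (∫⁻ x, ENNReal.ofReal (Real.exp (-κ * ‖x‖ ^ 2) * |u0 x|)) < ⊤) := by
  constructor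
  · intro h κ hκ
    have ht : (0:ℝ) < 1/(2*κ) := by positivity
    have H := h (1/(2*κ)) ht 0
    set t : ℝ := 1/(2*κ) with htdef
    have hc : (0:ℝ) < (2*π*t) ^ (-(ℓ:ℝ)/2) := by positivity
    have key : ∀ y : EuclideanSpace ℝ (Fin ℓ),
        ENNReal.ofReal ((2*π*t) ^ (-(ℓ:ℝ)/2) *
          Real.exp (-‖(0:EuclideanSpace ℝ (Fin ℓ)) - y‖^2 / (2*t)) * |u0 y|)
        = ENNReal.ofReal ((2*π*t) ^ (-(ℓ:ℝ)/2)) *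
          ENNReal.ofReal (Real.exp (-κ * ‖y‖^2) * |u0 y|) := by
      intro y
      rw [mul_assoc, ENNReal.ofReal_mul hc.le]
      congr 3
      rw [zero_sub, norm_neg, htdef]
      field_simp
    rw [show (fun y => ENNReal.ofReal ((2*π*t) ^ (-(ℓ:ℝ)/2) *
        Real.exp (-‖(0:EuclideanSpace ℝ (Fin ℓ)) - y‖^2 / (2*t)) * |u0 y|)) =
        (fun y => ENNReal.ofReal ((2*π*t) ^ (-(ℓ:ℝ)/2)) *
        ENNReal.ofReal (Real.exp (-κ * ‖y‖^2) * |u0 y|)) from funext key,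
      lintegral_const_mul' _ _ ENNReal.ofReal_ne_top] at H
    by_contra hcon
    push_neg at hcon
    rw [top_le_iff] at hcon
    rw [hcon, ENNReal.mul_top (by simp [hc])] at H
    exact absurd H (lt_irrefl _)
  · intro h t ht x
    have hκ : (0:ℝ) < 1/(4*t) := by positivity
    have H := h (1/(4*t)) hκ
    have hc : (0:ℝ) < (2*π*t) ^ (-(ℓ:ℝ)/2) := by positivity
    set C : ℝ := (2*π*t) ^ (-(ℓ:ℝ)/2) * Real.exp (‖x‖^2/(2*t)) with hC
    have hCpos : 0 < C := by positivity
    have bound : ∀ y : EuclideanSpace ℝ (Fin ℓ),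
        (2*π*t) ^ (-(ℓ:ℝ)/2) * Real.exp (-‖x-y‖^2/(2*t)) * |u0 y|
        ≤ C * (Real.exp (-(1/(4*t)) * ‖y‖^2) * |u0 y|) := by
      intro y
      have hxy : (‖y‖ - ‖x‖)^2 ≤ ‖x - y‖^2 := by
        have h1 := abs_norm_sub_norm_le x y
        have h2 := norm_nonneg (x - y)
        nlinarith [abs_nonneg (‖x‖ - ‖y‖), sq_abs (‖x‖ - ‖y‖)]
      have hexp : Real.exp (-‖x-y‖^2/(2*t))
          ≤ Real.exp (‖x‖^2/(2*t)) * Real.exp (-(1/(4*t)) * ‖y‖^2) := by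
        rw [← Real.exp_add]
        apply Real.exp_le_exp.2
        have hid : ‖x‖^2/(2*t) + (-(1/(4*t)) * ‖y‖^2) - (-‖x-y‖^2/(2*t))
            = (2*‖x‖^2 - ‖y‖^2 + 2*‖x-y‖^2)/(4*t) := by
          field_simp
          ring
        have hnum : 0 ≤ 2*‖x‖^2 - ‖y‖^2 + 2*‖x-y‖^2 := by
          nlinarith [sq_nonneg (‖y‖ - 2*‖x‖)]
        have := div_nonneg hnum (by linarith : (0:ℝ) ≤ 4*t)
        linarith [hid ▸ this]
      calc (2*π*t) ^ (-(ℓ:ℝ)/2) * Real.exp (-‖x-y‖^2/(2*t)) * |u0 y|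
          ≤ (2*π*t) ^ (-(ℓ:ℝ)/2) *
            (Real.exp (‖x‖^2/(2*t)) * Real.exp (-(1/(4*t)) * ‖y‖^2)) * |u0 y| := by
            apply mul_le_mul_of_nonneg_right _ (abs_nonneg _)
            exact mul_le_mul_of_nonneg_left hexp hc.le
        _ = C * (Real.exp (-(1/(4*t)) * ‖y‖^2) * |u0 y|) := by rw [hC]; ring
    calc (∫⁻ y, ENNReal.ofReal ((2*π*t) ^ (-(ℓ:ℝ)/2) *
            Real.exp (-‖x-y‖^2/(2*t)) * |u0 y|))
        ≤ ∫⁻ y, ENNReal.ofReal (C * (Real.exp (-(1/(4*t)) * ‖y‖^2) * |u0 y|)) :=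
          lintegral_mono fun y => ENNReal.ofReal_le_ofReal (bound y)
      _ = ENNReal.ofReal C * ∫⁻ y, ENNReal.ofReal (Real.exp (-(1/(4*t)) * ‖y‖^2) * |u0 y|) := by
          simp_rw [ENNReal.ofReal_mul hCpos.le]
          exact lintegral_const_mul' _ _ ENNReal.ofReal_ne_top
      _ < ⊤ := ENNReal.mul_lt_top ENNReal.ofReal_lt_top H
end

section
/- Let B be a standard ℓ-dimensional Brownian motion and, for κ > 0, let X be the Ornstein-Uhlenbeck process in ℝ^ℓ starting from 0 with generator (1/2)Δ − κx·∇ (i.e., dX(s) = dB(s) − κX(s)ds, X(0)=0). Then for all s, r ≥ 0 and all ξ, η ∈ ℝ^ℓ, E[(ξ·B(s))(η·B(r))] ≥ E[(ξ·X(s))(η·X(r))]; equivalently, the covariance E[B(s)⊗B(r)] dominates E[X(s)⊗X(r)] in the quadratic sense. Consequently, for any times s₁,r₁,…,s_d,r_d and vectors ξ₁,…,ξ_d ∈ ℝ^ℓ, E[(Σ_j ξ_j·(B(s_j)−B(r_j)))²] ≥ E[(Σ_j ξ_j·(X(s_j)−X(r_j)))²]. -/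
open Real MeasureTheory

noncomputable def gOU (κ t : ℝ) : ℝ → ℝ :=
  (Set.Icc 0 t).indicator (fun u => 1 - Real.exp (κ * (u - t)))

lemma gOU_integrable (κ t : ℝ) : Integrable (gOU κ t) := by
  rw [gOU, integrable_indicator_iff measurableSet_Icc]
  exact (Continuous.continuousOn (by continuity)).integrableOn_compact isCompact_Icc

lemma gOU_meas (κ t : ℝ) : AEStronglyMeasurable (gOU κ t) volume :=
  (gOU_integrable κ t).1

lemma gOU_bdd (κ t : ℝ) (hκ : 0 < κ) : ∀ u, ‖gOU κ t u‖ ≤ 1 := by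
  intro u
  rw [gOU, Real.norm_eq_abs]
  by_cases h : u ∈ Set.Icc 0 t
  · rw [Set.indicator_of_mem h]
    obtain ⟨h1, h2⟩ := h
    rw [abs_le]
    constructor
    · nlinarith [Real.exp_pos (κ * (u - t)), Real.exp_le_one_iff.2 (by nlinarith : κ * (u - t) ≤ 0)]
    · nlinarith [Real.exp_pos (κ * (u - t))]
  · rw [Set.indicator_of_notMem h]; norm_num

lemma gOU_mul_integrable (κ : ℝ) (hκ : 0 < κ) (t t' : ℝ) :
    Integrable (fun u => gOU κ t u * gOU κ t' u) :=
  (gOU_integrable κ t').bdd_mul (c := 1) (gOU_meas κ t) (ae_of_all _ (gOU_bdd κ t hκ))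

lemma gOU_inner_le (κ : ℝ) (hκ : 0 < κ) {s r : ℝ} (h0 : 0 ≤ s) (hsr : s ≤ r) :
    ∫ u, gOU κ s u * gOU κ r u =
      min s r - (1/(2*κ))*(Real.exp (-κ*|s-r|) - Real.exp (-κ*(s+r)))
        - (1 - Real.exp (-κ*s))*(1 - Real.exp (-κ*r))/κ := by
  have habs : |s - r| = r - s := by rw [abs_sub_comm]; exact abs_of_nonneg (by linarith)
  have hmin : min s r = s := min_eq_left hsr
  have hfun : (fun u => gOU κ s u * gOU κ r u) =
      (Set.Icc 0 s).indicator (fun u => (1 - Real.exp (κ*(u-s))) * (1 - Real.exp (κ*(u-r)))) := by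
    funext u
    by_cases h : u ∈ Set.Icc 0 s
    · rw [Set.indicator_of_mem h, gOU, gOU, Set.indicator_of_mem h,
        Set.indicator_of_mem (Set.Icc_subset_Icc_right hsr h)]
    · rw [Set.indicator_of_notMem h, gOU, Set.indicator_of_notMem h, zero_mul]
  rw [hfun, integral_indicator measurableSet_Icc, integral_Icc_eq_integral_Ioc,
    ← intervalIntegral.integral_of_le h0]
  have hFTC : ∫ u in (0:ℝ)..s, (1 - Real.exp (κ*(u-s))) * (1 - Real.exp (κ*(u-r)))
      = (s - Real.exp (κ*(s-s))/κ - Real.exp (κ*(s-r))/κ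
          + Real.exp (κ*(2*s-s-r))/(2*κ))
        - (0 - Real.exp (κ*(0-s))/κ - Real.exp (κ*(0-r))/κ
          + Real.exp (κ*(2*0-s-r))/(2*κ)) := by
    have := intervalIntegral.integral_eq_sub_of_hasDerivAt (a := 0) (b := s)
      (f := fun u => u - Real.exp (κ*(u-s))/κ - Real.exp (κ*(u-r))/κ
          + Real.exp (κ*(2*u-s-r))/(2*κ))
      (f' := fun u => (1 - Real.exp (κ*(u-s))) * (1 - Real.exp (κ*(u-r))))
    simp only [] at this
    apply this
    · intro u _
      have h1 : HasDerivAt (fun u : ℝ => κ*(u-s)) κ u := by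
        simpa using (((hasDerivAt_id u).sub_const s).const_mul κ)
      have h2 : HasDerivAt (fun u : ℝ => κ*(u-r)) κ u := by
        simpa using (((hasDerivAt_id u).sub_const r).const_mul κ)
      have h3 : HasDerivAt (fun u : ℝ => κ*(2*u-s-r)) (2*κ) u := by
        have : HasDerivAt (fun u : ℝ => 2*u-s-r) 2 u := by
          simpa using (((hasDerivAt_id u).const_mul 2).sub_const s).sub_const r
        simpa [mul_comm] using this.const_mul κ
      have e1 := (h1.exp.div_const κ)
      have e2 := (h2.exp.div_const κ)
      have e3 := (h3.exp.div_const (2*κ))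
      have := (((hasDerivAt_id u).sub e1).sub e2).add e3
      convert this using 1
      · rfl
      rw [show κ*(2*u-s-r) = κ*(u-s) + κ*(u-r) by ring, Real.exp_add]
      field_simp
      ring
    · apply Continuous.intervalIntegrable
      fun_prop
  rw [hFTC, hmin, habs]

  have E : ∀ a b : ℝ, Real.exp (a + b) = Real.exp a * Real.exp b := Real.exp_add
  have e1 : Real.exp (κ*(s-s)) = 1 := by norm_num
  have e2 : Real.exp (κ*(s-r)) = Real.exp (-κ*(r-s)) := by ring_nf
  have e3 : Real.exp (κ*(2*s-s-r)) = Real.exp (-κ*(r-s)) := by ring_nf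
  have e4 : Real.exp (κ*(0-s)) = Real.exp (-κ*s) := by ring_nf
  have e5 : Real.exp (κ*(0-r)) = Real.exp (-κ*r) := by ring_nf
  have e6 : Real.exp (κ*(2*0-s-r)) = Real.exp (-κ*(s+r)) := by ring_nf
  have e7 : Real.exp (-κ*(s+r)) = Real.exp (-κ*s) * Real.exp (-κ*r) := by
    rw [← Real.exp_add]; ring_nf
  rw [e1, e2, e3, e4, e5, e6, e7]
  field_simp
  ring

lemma Kker_repr (κ : ℝ) (hκ : 0 < κ) {s r : ℝ} (hs : 0 ≤ s) (hr : 0 ≤ r) :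
    min s r - (1/(2*κ))*(Real.exp (-κ*|s-r|) - Real.exp (-κ*(s+r)))
      = (∫ u, gOU κ s u * gOU κ r u)
        + (1 - Real.exp (-κ*s))*(1 - Real.exp (-κ*r))/κ := by
  rcases le_total s r with h | h
  · rw [gOU_inner_le κ hκ hs h]; ring
  · have h2 := gOU_inner_le κ hκ hr h
    have hcomm : (fun u => gOU κ s u * gOU κ r u) = fun u => gOU κ r u * gOU κ s u := by
      funext u; ring
    rw [hcomm, h2, min_comm, abs_sub_comm, show r + s = s + r from add_comm r s]
    ring

lemma delta_integrable (κ : ℝ) (hκ : 0 < κ) (a b c e : ℝ) :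
    Integrable (fun u => (gOU κ a u - gOU κ b u) * (gOU κ c u - gOU κ e u)) := by
  have h : (fun u => (gOU κ a u - gOU κ b u) * (gOU κ c u - gOU κ e u))
      = fun u => gOU κ a u * gOU κ c u - gOU κ a u * gOU κ e u
          - gOU κ b u * gOU κ c u + gOU κ b u * gOU κ e u := by funext u; ring
  rw [h]
  exact (((gOU_mul_integrable κ hκ a c).sub (gOU_mul_integrable κ hκ a e)).sub
    (gOU_mul_integrable κ hκ b c)).add (gOU_mul_integrable κ hκ b e)

lemma integral_delta (κ : ℝ) (hκ : 0 < κ) (a b c e : ℝ) :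
    ∫ u, (gOU κ a u - gOU κ b u) * (gOU κ c u - gOU κ e u)
      = (∫ u, gOU κ a u * gOU κ c u) - (∫ u, gOU κ a u * gOU κ e u)
        - (∫ u, gOU κ b u * gOU κ c u) + (∫ u, gOU κ b u * gOU κ e u) := by
  have h : (fun u => (gOU κ a u - gOU κ b u) * (gOU κ c u - gOU κ e u))
      = fun u => gOU κ a u * gOU κ c u - gOU κ a u * gOU κ e u
          - gOU κ b u * gOU κ c u + gOU κ b u * gOU κ e u := by funext u; ring
  have i_ac := gOU_mul_integrable κ hκ a c
  have i_ae := gOU_mul_integrable κ hκ a e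
  have i_bc := gOU_mul_integrable κ hκ b c
  have i_be := gOU_mul_integrable κ hκ b e
  have h1 : Integrable (fun u => gOU κ a u * gOU κ c u - gOU κ a u * gOU κ e u) := i_ac.sub i_ae
  have h2 : Integrable (fun u => gOU κ a u * gOU κ c u - gOU κ a u * gOU κ e u
      - gOU κ b u * gOU κ c u) := h1.sub i_bc
  rw [h, integral_add h2 i_be, integral_sub h1 i_bc, integral_sub i_ac i_ae]

lemma quad_nonneg (κ : ℝ) (hκ : 0 < κ) (d : ℕ) (s r : Fin d → ℝ) (a : Fin d → ℝ) :
    0 ≤ ∑ j, ∑ k, a j * a k *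
      ((∫ u, (gOU κ (s j) u - gOU κ (r j) u) * (gOU κ (s k) u - gOU κ (r k) u))
        + (Real.exp (-κ * r j) - Real.exp (-κ * s j)) *
          (Real.exp (-κ * r k) - Real.exp (-κ * s k)) / κ) := by
  have hInt : ∀ j k : Fin d, Integrable (fun u => (a j * a k) *
      ((gOU κ (s j) u - gOU κ (r j) u) * (gOU κ (s k) u - gOU κ (r k) u))) := fun j k =>
    (delta_integrable κ hκ _ _ _ _).const_mul _
  have hA : (∫ u, (∑ j, a j * (gOU κ (s j) u - gOU κ (r j) u))^2)
      = ∑ j, ∑ k, a j * a k *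
        ∫ u, (gOU κ (s j) u - gOU κ (r j) u) * (gOU κ (s k) u - gOU κ (r k) u) := by
    have hpt : ∀ u, (∑ j, a j * (gOU κ (s j) u - gOU κ (r j) u))^2
        = ∑ j, ∑ k, a j * a k *
          ((gOU κ (s j) u - gOU κ (r j) u) * (gOU κ (s k) u - gOU κ (r k) u)) := by
      intro u
      rw [sq, Finset.sum_mul_sum]
      exact Finset.sum_congr rfl fun j _ => Finset.sum_congr rfl fun k _ => by ring
    simp_rw [hpt]
    rw [integral_finset_sum _ (fun j _ => integrable_finset_sum _ (fun k _ => hInt j k))]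
    refine Finset.sum_congr rfl fun j _ => ?_
    rw [integral_finset_sum _ (fun k _ => hInt j k)]
    exact Finset.sum_congr rfl fun k _ => integral_const_mul _ _
  have hB : (∑ j, a j * (Real.exp (-κ * r j) - Real.exp (-κ * s j)))^2
      = ∑ j, ∑ k, a j * a k *
        ((Real.exp (-κ * r j) - Real.exp (-κ * s j)) *
          (Real.exp (-κ * r k) - Real.exp (-κ * s k))) := by
    rw [sq, Finset.sum_mul_sum]
    exact Finset.sum_congr rfl fun j _ => Finset.sum_congr rfl fun k _ => by ring
  have hsplit : ∑ j, ∑ k, a j * a k *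
      ((∫ u, (gOU κ (s j) u - gOU κ (r j) u) * (gOU κ (s k) u - gOU κ (r k) u))
        + (Real.exp (-κ * r j) - Real.exp (-κ * s j)) *
          (Real.exp (-κ * r k) - Real.exp (-κ * s k)) / κ)
      = (∑ j, ∑ k, a j * a k *
          ∫ u, (gOU κ (s j) u - gOU κ (r j) u) * (gOU κ (s k) u - gOU κ (r k) u))
        + (∑ j, ∑ k, a j * a k *
          ((Real.exp (-κ * r j) - Real.exp (-κ * s j)) *
            (Real.exp (-κ * r k) - Real.exp (-κ * s k)))) / κ := by
    rw [Finset.sum_div, ← Finset.sum_add_distrib]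
    refine Finset.sum_congr rfl fun j _ => ?_
    rw [Finset.sum_div, ← Finset.sum_add_distrib]
    refine Finset.sum_congr rfl fun k _ => by ring
  rw [hsplit, ← hA, ← hB]
  exact add_nonneg (integral_nonneg fun u => sq_nonneg _)
    (div_nonneg (sq_nonneg _) hκ.le)


/-- Donsker–Varadhan comparison: the covariance kernel `min(s,r)` of Brownian motion
dominates, in the quadratic sense, the covariance kernel
`(1/(2κ))(e^{-κ|s-r|} − e^{-κ(s+r)})` of the Ornstein–Uhlenbeck process with
generator `(1/2)Δ − κx·∇` started at `0`.  Consequently, for all times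
`s₁,r₁,…,s_d,r_d ≥ 0` and vectors `ξ₁,…,ξ_d ∈ ℝ^ℓ`,
`E[(Σ_j ξ_j·(B(s_j)−B(r_j)))²] ≥ E[(Σ_j ξ_j·(X(s_j)−X(r_j)))²]`, both expectations
being expressed through the respective covariance kernels. -/
theorem stmt_7 (ℓ : ℕ) (κ : ℝ) (hκ : 0 < κ) (d : ℕ)
    (s r : Fin d → ℝ) (hs : ∀ j, 0 ≤ s j) (hr : ∀ j, 0 ≤ r j)
    (ξ : Fin d → EuclideanSpace ℝ (Fin ℓ)) :
    (∑ j, ∑ k, (∑ i, ξ j i * ξ k i) *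
        (min (s j) (s k) - min (s j) (r k) - min (r j) (s k) + min (r j) (r k))) ≥
      ∑ j, ∑ k, (∑ i, ξ j i * ξ k i) *
        (((1 / (2 * κ)) * (Real.exp (-κ * |s j - s k|) - Real.exp (-κ * (s j + s k))))
          - ((1 / (2 * κ)) * (Real.exp (-κ * |s j - r k|) - Real.exp (-κ * (s j + r k))))
          - ((1 / (2 * κ)) * (Real.exp (-κ * |r j - s k|) - Real.exp (-κ * (r j + s k))))
          + ((1 / (2 * κ)) * (Real.exp (-κ * |r j - r k|) - Real.exp (-κ * (r j + r k))))) := by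
  have key : ∀ j k : Fin d,
      (min (s j) (s k) - min (s j) (r k) - min (r j) (s k) + min (r j) (r k)) -
      (((1 / (2 * κ)) * (Real.exp (-κ * |s j - s k|) - Real.exp (-κ * (s j + s k))))
        - ((1 / (2 * κ)) * (Real.exp (-κ * |s j - r k|) - Real.exp (-κ * (s j + r k))))
        - ((1 / (2 * κ)) * (Real.exp (-κ * |r j - s k|) - Real.exp (-κ * (r j + s k))))
        + ((1 / (2 * κ)) * (Real.exp (-κ * |r j - r k|) - Real.exp (-κ * (r j + r k))))) =
      (∫ u, (gOU κ (s j) u - gOU κ (r j) u) * (gOU κ (s k) u - gOU κ (r k) u))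
        + (Real.exp (-κ * r j) - Real.exp (-κ * s j)) *
          (Real.exp (-κ * r k) - Real.exp (-κ * s k)) / κ := by
    intro j k
    rw [integral_delta κ hκ]
    have h1 := Kker_repr κ hκ (hs j) (hs k)
    have h2 := Kker_repr κ hκ (hs j) (hr k)
    have h3 := Kker_repr κ hκ (hr j) (hs k)
    have h4 := Kker_repr κ hκ (hr j) (hr k)
    linear_combination h1 - h2 - h3 + h4
  have main_eq : (∑ j, ∑ k, (∑ i, ξ j i * ξ k i) *
        (min (s j) (s k) - min (s j) (r k) - min (r j) (s k) + min (r j) (r k))) -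
      (∑ j, ∑ k, (∑ i, ξ j i * ξ k i) *
        (((1 / (2 * κ)) * (Real.exp (-κ * |s j - s k|) - Real.exp (-κ * (s j + s k))))
          - ((1 / (2 * κ)) * (Real.exp (-κ * |s j - r k|) - Real.exp (-κ * (s j + r k))))
          - ((1 / (2 * κ)) * (Real.exp (-κ * |r j - s k|) - Real.exp (-κ * (r j + s k))))
          + ((1 / (2 * κ)) * (Real.exp (-κ * |r j - r k|) - Real.exp (-κ * (r j + r k)))))) =
      ∑ j, ∑ k, (∑ i, ξ j i * ξ k i) *
        ((∫ u, (gOU κ (s j) u - gOU κ (r j) u) * (gOU κ (s k) u - gOU κ (r k) u))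
          + (Real.exp (-κ * r j) - Real.exp (-κ * s j)) *
            (Real.exp (-κ * r k) - Real.exp (-κ * s k)) / κ) := by
    rw [← Finset.sum_sub_distrib]
    refine Finset.sum_congr rfl fun j _ => ?_
    rw [← Finset.sum_sub_distrib]
    refine Finset.sum_congr rfl fun k _ => ?_
    rw [← mul_sub, key j k]
  rw [ge_iff_le, ← sub_nonneg, main_eq]
  have comm1 : ∀ j : Fin d, ∑ k : Fin d, ∑ i : Fin ℓ, ξ j i * ξ k i *
      ((∫ u, (gOU κ (s j) u - gOU κ (r j) u) * (gOU κ (s k) u - gOU κ (r k) u))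
        + (Real.exp (-κ * r j) - Real.exp (-κ * s j)) *
          (Real.exp (-κ * r k) - Real.exp (-κ * s k)) / κ)
      = ∑ i : Fin ℓ, ∑ k : Fin d, ξ j i * ξ k i *
      ((∫ u, (gOU κ (s j) u - gOU κ (r j) u) * (gOU κ (s k) u - gOU κ (r k) u))
        + (Real.exp (-κ * r j) - Real.exp (-κ * s j)) *
          (Real.exp (-κ * r k) - Real.exp (-κ * s k)) / κ) := fun j => Finset.sum_comm
  simp_rw [Finset.sum_mul, comm1]
  rw [Finset.sum_comm]
  apply Finset.sum_nonneg
  intro i _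
  exact quad_nonneg κ hκ d s r (fun j => ξ j i)
end

section
/- As β → ∞, φ_β(λ) → 0 and φ_β(λ) ~ (λ/(bβ))^{1/(b−1)}; consequently g_β(λ) := ψ_β(φ_β(λ)) = (1/2)β²b²φ_β(λ)^{2b−2} + βφ_β(λ)^b converges to λ²/2 for every fixed λ > 0. -/
open Real Filter

/-- As `β → ∞`: `φ_β(λ) → 0`, `φ_β(λ) ~ (λ/(bβ))^{1/(b−1)}`, and
`g_β(λ) = ψ_β(φ_β(λ)) = (1/2)β²b²φ_β(λ)^{2b−2} + βφ_β(λ)^b → λ²/2`,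
where `φ_β(λ)` denotes the unique positive solution of `βb w^{b−1} = λ − w`. -/
theorem stmt_12 (b lam : ℝ) (hb : b ∈ Set.Ioo (1:ℝ) 2) (hlam : 0 < lam)
    (φ : ℝ → ℝ)
    (hφ : ∀ β : ℝ, 0 < β → 0 < φ β ∧ β * b * (φ β) ^ (b - 1) = lam - φ β) :
    Tendsto φ atTop (nhds 0) ∧
    Tendsto (fun β => φ β / (lam / (b * β)) ^ (1 / (b - 1))) atTop (nhds 1) ∧
    Tendsto (fun β => (1/2) * β ^ 2 * b ^ 2 * (φ β) ^ (2 * b - 2) + β * (φ β) ^ b)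
      atTop (nhds (lam ^ 2 / 2)) := by
  obtain ⟨hb1, hb2⟩ := hb
  have hb0 : 0 < b := by linarith
  have hbm1 : 0 < b - 1 := by linarith
  have hepos : 0 < 1 / (b - 1) := one_div_pos.mpr hbm1
  have key : ∀ β : ℝ, 0 < β → φ β < lam ∧ (φ β) ^ (b - 1) = (lam - φ β) / (b * β) := by
    intro β hβ
    obtain ⟨hpos, heq⟩ := hφ β hβ
    have hr : 0 < (φ β) ^ (b - 1) := rpow_pos_of_pos hpos _
    have hprod : 0 < β * b * (φ β) ^ (b - 1) := mul_pos (mul_pos hβ hb0) hr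
    have h1 : φ β < lam := by linarith
    refine ⟨h1, ?_⟩
    have hbβ : b * β ≠ 0 := by positivity
    field_simp
    linear_combination heq
  -- φ expressed via rpow inverse
  have hexp : ∀ β : ℝ, 0 < β → φ β = ((lam - φ β) / (b * β)) ^ (1 / (b - 1)) := by
    intro β hβ
    obtain ⟨hpos, _⟩ := hφ β hβ
    obtain ⟨_, heq⟩ := key β hβ
    have h : ((φ β) ^ (b - 1)) ^ (1 / (b - 1)) = φ β := by
      rw [← rpow_mul hpos.le, mul_one_div_cancel (ne_of_gt hbm1), rpow_one]
    conv_lhs => rw [← h, heq]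
  -- upper bound
  have hub : ∀ β : ℝ, 0 < β → φ β ≤ (lam / (b * β)) ^ (1 / (b - 1)) := by
    intro β hβ
    obtain ⟨hpos, _⟩ := hφ β hβ
    have hlt := (key β hβ).1
    rw [hexp β hβ]
    exact rpow_le_rpow (div_nonneg (by linarith) (by positivity))
      (by gcongr; linarith) hepos.le
  -- the comparison function tends to 0
  have hcmp : Tendsto (fun β : ℝ => (lam / (b * β)) ^ (1 / (b - 1))) atTop (nhds 0) := by
    have h1 : Tendsto (fun β : ℝ => lam / (b * β)) atTop (nhds 0) := by
      apply Tendsto.div_atTop tendsto_const_nhds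
      exact tendsto_id.const_mul_atTop hb0
    have hc : ContinuousAt (fun x : ℝ => x ^ (1 / (b - 1))) 0 :=
      continuousAt_rpow_const 0 _ (Or.inr hepos.le)
    have h2 := hc.tendsto.comp h1
    rw [Real.zero_rpow hepos.ne'] at h2
    exact h2
  have h0 : Tendsto φ atTop (nhds 0) := by
    apply squeeze_zero' ((eventually_gt_atTop 0).mono fun β hβ => (hφ β hβ).1.le)
      ((eventually_gt_atTop 0).mono fun β hβ => hub β hβ) hcmp
  refine ⟨h0, ?_, ?_⟩
  · -- ratio → 1
    have heq2 : ∀ᶠ β : ℝ in atTop,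
        ((lam - φ β) / lam) ^ (1 / (b - 1)) = φ β / (lam / (b * β)) ^ (1 / (b - 1)) := by
      filter_upwards [eventually_gt_atTop (0:ℝ)] with β hβ
      obtain ⟨hlt, _⟩ := key β hβ
      have hbβ : 0 < b * β := by positivity
      have hsplit : (lam - φ β) / (b * β) = ((lam - φ β) / lam) * (lam / (b * β)) := by
        field_simp
      have hB : (0:ℝ) < (lam / (b * β)) ^ (1 / (b - 1)) := rpow_pos_of_pos (by positivity) _
      conv_rhs => rw [hexp β hβ, hsplit,
        mul_rpow (div_nonneg (by linarith) hlam.le) (by positivity)]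
      rw [mul_div_assoc, div_self (ne_of_gt hB), mul_one]
    have hlim : Tendsto (fun β : ℝ => ((lam - φ β) / lam) ^ (1 / (b - 1))) atTop (nhds 1) := by
      have h1 : Tendsto (fun β : ℝ => (lam - φ β) / lam) atTop (nhds 1) := by
        have := ((tendsto_const_nhds (x := lam)).sub h0).div_const lam
        simpa [div_self (ne_of_gt hlam)] using this
      have hc : ContinuousAt (fun x : ℝ => x ^ (1 / (b - 1))) 1 :=
        continuousAt_rpow_const 1 _ (Or.inl one_ne_zero)
      have h2 := hc.tendsto.comp h1
      simpa [Function.comp_def] using h2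
    exact hlim.congr' heq2
  · -- g → lam^2/2
    have heq3 : ∀ᶠ β : ℝ in atTop,
        (lam - φ β) ^ 2 / 2 + (lam - φ β) * φ β / b
          = (1/2) * β ^ 2 * b ^ 2 * (φ β) ^ (2 * b - 2) + β * (φ β) ^ b := by
      filter_upwards [eventually_gt_atTop (0:ℝ)] with β hβ
      obtain ⟨hpos, heq⟩ := hφ β hβ
      have h2 : (φ β) ^ (2 * b - 2) = ((φ β) ^ (b - 1)) ^ 2 := by
        rw [← rpow_natCast ((φ β) ^ (b - 1)) 2, ← rpow_mul hpos.le]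
        norm_num
        ring_nf
      have h3 : (φ β) ^ b = (φ β) ^ (b - 1) * φ β := by
        nth_rewrite 1 [show b = (b - 1) + 1 by ring]
        rw [rpow_add hpos, rpow_one]
      rw [h2, h3, ← heq]
      field_simp
    have hF : Tendsto (fun x : ℝ => (lam - x) ^ 2 / 2 + (lam - x) * x / b) (nhds 0)
        (nhds (lam ^ 2 / 2)) := by
      have hc : ContinuousAt (fun x : ℝ => (lam - x) ^ 2 / 2 + (lam - x) * x / b) 0 := by
        fun_prop
      have h2 := hc.tendsto
      simpa using h2
    exact (hF.comp h0).congr' heq3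
end

section
/- Suppose u0 : ℝ^ℓ → [0,∞) is measurable, not almost everywhere zero, with support condition: there exists M > 0 with ∫_{|y|≤M} u0(y) dy > 0. Let a > 1, c > 0, and λ < K√c, and choose x_t so that |x_t| = λ t^{(a+1)/2}. Then liminf_{t→∞} t^{−a} log ∫_{|y| ≤ K√c t^{(a+1)/2}} p_t(y) u0(x_t + y) dy ≥ −K²c/2. -/
open MeasureTheory Real Filter
open scoped Topology

/-- If `u0 ≥ 0` is nontrivial on a ball of radius `M`, `a > 1`, `c > 0`,
`0 ≤ λ < K√c`, and `|x_t| = λ t^{(a+1)/2}`, then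
`liminf_{t→∞} t^{−a} log ∫_{|y| ≤ K√c t^{(a+1)/2}} p_t(y) u0(x_t + y) dy ≥ −K²c/2`. -/
theorem stmt_13 (ℓ : ℕ) (u0 : EuclideanSpace ℝ (Fin ℓ) → ℝ)
    (hmeas : Measurable u0) (hnn : ∀ y, 0 ≤ u0 y)
    (M : ℝ) (hM : 0 < M)
    (hpos : 0 < ∫⁻ y in {y : EuclideanSpace ℝ (Fin ℓ) | ‖y‖ ≤ M}, ENNReal.ofReal (u0 y))
    (a c K lam : ℝ) (ha : 1 < a) (hc : 0 < c) (hK : 0 < K)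
    (hlam : 0 ≤ lam) (hlt : lam < K * Real.sqrt c)
    (xt : ℝ → EuclideanSpace ℝ (Fin ℓ))
    (hx : ∀ t : ℝ, 0 < t → ‖xt t‖ = lam * t ^ ((a + 1) / 2)) :
    liminf (fun t : ℝ => t ^ (-a) * Real.log
        (∫ y in {y : EuclideanSpace ℝ (Fin ℓ) | ‖y‖ ≤ K * Real.sqrt c * t ^ ((a + 1) / 2)},
          (2 * π * t) ^ (-(ℓ : ℝ) / 2) * Real.exp (-‖y‖ ^ 2 / (2 * t)) * u0 (xt t + y)))
      atTop ≥ -(K ^ 2 * c / 2) := by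
  classical
  set p : ℝ := (a + 1) / 2 with hp
  have hsc : 0 < Real.sqrt c := Real.sqrt_pos.mpr hc
  have hKc : 0 < K * Real.sqrt c := mul_pos hK hsc
  -- the ball B and truncated function v
  set B : Set (EuclideanSpace ℝ (Fin ℓ)) := {y : (EuclideanSpace ℝ (Fin ℓ)) | ‖y‖ ≤ M} with hBdef
  have hBball : B = Metric.closedBall (0 : (EuclideanSpace ℝ (Fin ℓ))) M := by
    ext y; simp [hBdef, Metric.mem_closedBall, dist_zero_right]
  have hBmeas : MeasurableSet B := by
    rw [hBball]; exact Metric.isClosed_closedBall.measurableSet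
  have hBfin : volume B < ⊤ := by
    rw [hBball]
    exact (isCompact_closedBall _ _).measure_lt_top
  set v : (EuclideanSpace ℝ (Fin ℓ)) → ℝ := fun z => min (u0 z) 1 with hvdef
  have hvmeas : Measurable v := by exact hmeas.min measurable_const
  have hvnn : ∀ z, 0 ≤ v z := fun z => le_min (hnn z) zero_le_one
  have hvle1 : ∀ z, v z ≤ 1 := fun z => min_le_right _ _
  have hvleu : ∀ z, v z ≤ u0 z := fun z => min_le_left _ _
  -- v is integrable on B
  have hvint : IntegrableOn v B volume := by
    apply Measure.integrableOn_of_bounded hBfin.ne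
      (hvmeas.aestronglyMeasurable) (M := 1)
    filter_upwards with z
    rw [Real.norm_eq_abs, abs_of_nonneg (hvnn z)]
    exact hvle1 z
  -- I₀ := ∫ v on B is positive
  set I₀ : ℝ := ∫ z in B, v z with hI₀def
  have hI₀pos : 0 < I₀ := by
    rw [hI₀def, setIntegral_pos_iff_support_of_nonneg_ae
      (Filter.Eventually.of_forall hvnn) hvint]
    -- show 0 < volume (support v ∩ B)
    by_contra hcon
    push_neg at hcon
    have h0 : volume (Function.support v ∩ B) = 0 := le_antisymm hcon (by simp)
    have hae : ∀ᵐ z ∂(volume.restrict B), ENNReal.ofReal (u0 z) = 0 := by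
      rw [ae_restrict_iff' hBmeas]
      have : ∀ᵐ z ∂(volume : Measure (EuclideanSpace ℝ (Fin ℓ))), z ∉ Function.support v ∩ B := by
        rw [ae_iff]; simp only [not_not]; exact h0
      filter_upwards [this] with z hz hzB
      have : z ∉ Function.support v := fun hs => hz ⟨hs, hzB⟩
      have hv0 : v z = 0 := Function.notMem_support.mp this
      have : u0 z = 0 := by
        rcases min_cases (u0 z) 1 with ⟨h1, _⟩ | ⟨h1, h2⟩
        · rw [hvdef] at hv0; simp only at hv0; rw [h1] at hv0; exact hv0
        · rw [hvdef] at hv0; simp only at hv0; rw [h1] at hv0; norm_num at hv0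
      simp [this]
    have : (∫⁻ y in B, ENNReal.ofReal (u0 y)) = 0 := by
      rw [lintegral_congr_ae hae, lintegral_zero]
    rw [this] at hpos; exact lt_irrefl _ hpos
  -- eventual bound function
  set h : ℝ → ℝ := fun t =>
    t ^ (-a) * (Real.log I₀ - (ℓ : ℝ) / 2 * Real.log (2 * π * t)) - K ^ 2 * c / 2
    with hhdef
  -- h tends to -(K^2*c/2)
  have hhtend : Tendsto h atTop (𝓝 (-(K ^ 2 * c / 2))) := by
    have h1 : Tendsto (fun t : ℝ => t ^ (-a) * Real.log I₀) atTop (𝓝 0) := by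
      simpa using (tendsto_rpow_neg_atTop (by linarith : (0:ℝ) < a)).mul_const (Real.log I₀)
    have h2 : Tendsto (fun t : ℝ => t ^ (-a) * Real.log (2 * π * t)) atTop (𝓝 0) := by
      have hlog : Tendsto (fun t : ℝ => Real.log t / t ^ a) atTop (𝓝 0) :=
        (isLittleO_log_rpow_atTop (by linarith : (0:ℝ) < a)).tendsto_div_nhds_zero
      have hconst : Tendsto (fun t : ℝ => t ^ (-a) * Real.log (2 * π)) atTop (𝓝 0) := by
        simpa using (tendsto_rpow_neg_atTop (by linarith : (0:ℝ) < a)).mul_const (Real.log (2*π))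
      have : Tendsto (fun t : ℝ => t ^ (-a) * Real.log (2 * π) + Real.log t / t ^ a)
          atTop (𝓝 0) := by simpa using hconst.add hlog
      apply this.congr'
      filter_upwards [eventually_gt_atTop (0:ℝ)] with t ht
      rw [Real.log_mul (by positivity) (ne_of_gt ht), Real.rpow_neg ht.le]
      ring
    have : Tendsto (fun t : ℝ =>
        (t ^ (-a) * Real.log I₀ - (ℓ : ℝ) / 2 * (t ^ (-a) * Real.log (2 * π * t)))
          - K ^ 2 * c / 2) atTop (𝓝 ((0 - (ℓ:ℝ)/2 * 0) - K ^ 2 * c / 2)) :=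
      (h1.sub (h2.const_mul _)).sub_const _
    simp only [mul_zero, sub_zero, zero_sub] at this
    apply this.congr
    intro t; rw [hhdef]; ring
  -- main eventual inequality
  have hev : ∀ᶠ t : ℝ in atTop, h t ≤ t ^ (-a) * Real.log
      (∫ y in {y : (EuclideanSpace ℝ (Fin ℓ)) | ‖y‖ ≤ K * Real.sqrt c * t ^ ((a + 1) / 2)},
        (2 * π * t) ^ (-(ℓ : ℝ) / 2) * Real.exp (-‖y‖ ^ 2 / (2 * t)) * u0 (xt t + y)) := by
    have hT1 : ∀ᶠ t : ℝ in atTop, M ≤ (K * Real.sqrt c - lam) * t ^ p := by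
      have := tendsto_rpow_atTop (show (0:ℝ) < p by rw [hp]; linarith)
      exact (this.const_mul_atTop (by linarith : (0:ℝ) < K * Real.sqrt c - lam)).eventually_ge_atTop M
    have hT2 : ∀ᶠ t : ℝ in atTop, h t ≤ 0 := by
      filter_upwards [hhtend.eventually_le_const
        (show -(K ^ 2 * c / 2) < 0 from neg_lt_zero.mpr (by positivity))] with t ht
      linarith
    filter_upwards [eventually_ge_atTop (1:ℝ), hT1, hT2] with t ht1 hMt hh0
    have ht0 : 0 < t := lt_of_lt_of_le one_pos ht1
    set S : Set (EuclideanSpace ℝ (Fin ℓ)) := {y : (EuclideanSpace ℝ (Fin ℓ)) | ‖y‖ ≤ K * Real.sqrt c * t ^ ((a + 1) / 2)} with hSdef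
    set g : (EuclideanSpace ℝ (Fin ℓ)) → ℝ := fun y =>
      (2 * π * t) ^ (-(ℓ : ℝ) / 2) * Real.exp (-‖y‖ ^ 2 / (2 * t)) * u0 (xt t + y)
      with hgdef
    by_cases hig : IntegrableOn g S volume
    · -- integrable case
      set A : Set (EuclideanSpace ℝ (Fin ℓ)) := {y : (EuclideanSpace ℝ (Fin ℓ)) | ‖xt t + y‖ ≤ M} with hAdef
      have hAball : A = Metric.closedBall (-(xt t)) M := by
        ext y
        simp only [hAdef, Set.mem_setOf_eq, Metric.mem_closedBall, dist_eq_norm,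
          sub_neg_eq_add]
        rw [add_comm]
      have hAmeas : MeasurableSet A := by
        rw [hAball]; exact Metric.isClosed_closedBall.measurableSet
      have hAfin : volume A < ⊤ := by
        rw [hAball]; exact (isCompact_closedBall _ _).measure_lt_top
      have hAS : A ⊆ S := by
        intro y hy
        have h1 : ‖xt t + y‖ ≤ M := hy
        have h2 : ‖y‖ ≤ ‖xt t + y‖ + ‖xt t‖ := by
          calc ‖y‖ = ‖xt t + y - xt t‖ := by rw [add_sub_cancel_left]
          _ ≤ ‖xt t + y‖ + ‖xt t‖ := norm_sub_le _ _
        have h3 : ‖xt t‖ = lam * t ^ p := hx t ht0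
        have : ‖y‖ ≤ M + lam * t ^ p := by rw [← h3]; linarith
        have : ‖y‖ ≤ K * Real.sqrt c * t ^ p := by nlinarith [hMt]
        exact this
      have hgnn : ∀ y, 0 ≤ g y := by
        intro y
        apply mul_nonneg (mul_nonneg _ (Real.exp_pos _).le) (hnn _)
        positivity
      -- the constants
      set C : ℝ := (2 * π * t) ^ (-(ℓ : ℝ) / 2) * Real.exp (-(K ^ 2 * c * t ^ a) / 2)
        with hCdef
      have hCpos : 0 < C := by positivity
      -- exponent bound on S
      have hexp : ∀ y ∈ S, Real.exp (-(K ^ 2 * c * t ^ a) / 2)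
          ≤ Real.exp (-‖y‖ ^ 2 / (2 * t)) := by
        intro y hy
        apply Real.exp_le_exp.mpr
        rw [div_le_div_iff₀ (by norm_num) (by positivity), neg_mul, neg_mul]
        rw [neg_le_neg_iff]
        have hny : ‖y‖ ≤ K * Real.sqrt c * t ^ p := hy
        have h1 : ‖y‖ ^ 2 ≤ (K * Real.sqrt c * t ^ p) ^ 2 := by
          apply sq_le_sq' _ hny
          have := norm_nonneg y; linarith
        have h2 : (K * Real.sqrt c * t ^ p) ^ 2 = K ^ 2 * c * t ^ (a + 1) := by
          rw [mul_pow, mul_pow, Real.sq_sqrt hc.le, ← Real.rpow_natCast (t ^ p) 2,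
            ← Real.rpow_mul ht0.le]
          norm_num [hp]
        have h3 : t ^ (a + 1) = t ^ a * t := by
          rw [Real.rpow_add_one (ne_of_gt ht0)]
        calc ‖y‖ ^ 2 * 2 ≤ K ^ 2 * c * t ^ (a+1) * 2 := by nlinarith
        _ = K ^ 2 * c * t ^ a * (2 * t) := by rw [h3]; ring
      -- lower bound the integral
      have key : C * I₀ ≤ ∫ y in S, g y := by
        have step1 : (∫ y in A, g y) ≤ ∫ y in S, g y :=
          setIntegral_mono_set hig
            (Filter.Eventually.of_forall fun y => hgnn y)
            (HasSubset.Subset.eventuallyLE hAS)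
        have hintA : IntegrableOn g A volume := hig.mono_set hAS
        have hintCv : IntegrableOn (fun y => C * v (xt t + y)) A volume := by
          apply Measure.integrableOn_of_bounded hAfin.ne (M := C)
          · exact ((hvmeas.comp (measurable_const_add (xt t))).const_mul C).aestronglyMeasurable
          · filter_upwards with y
            rw [Real.norm_eq_abs, abs_of_nonneg (mul_nonneg hCpos.le (hvnn _))]
            calc C * v (xt t + y) ≤ C * 1 := by
                  apply mul_le_mul_of_nonneg_left (hvle1 _) hCpos.le
            _ = C := mul_one C
        have step2 : (∫ y in A, C * v (xt t + y)) ≤ ∫ y in A, g y := by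
          apply setIntegral_mono_on hintCv hintA hAmeas
          intro y hy
          have h1 : Real.exp (-(K ^ 2 * c * t ^ a) / 2) ≤ Real.exp (-‖y‖ ^ 2 / (2 * t)) :=
            hexp y (hAS hy)
          have h2 : v (xt t + y) ≤ u0 (xt t + y) := hvleu _
          have hpref : (0:ℝ) ≤ (2 * π * t) ^ (-(ℓ : ℝ) / 2) := by positivity
          simp only [hgdef, hCdef]
          exact mul_le_mul (mul_le_mul_of_nonneg_left h1 hpref) h2 (hvnn _)
            (by positivity)
        have step3 : (∫ y in A, C * v (xt t + y)) = C * I₀ := by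
          rw [integral_const_mul]
          congr 1
          -- translation invariance
          have e1 : (∫ y in A, v (xt t + y)) = ∫ y, A.indicator (fun y => v (xt t + y)) y := by
            rw [integral_indicator hAmeas]
          have e2 : ∀ y : (EuclideanSpace ℝ (Fin ℓ)), A.indicator (fun y => v (xt t + y)) y
              = B.indicator v (xt t + y) := by
            intro y
            by_cases hy : y ∈ A
            · rw [Set.indicator_of_mem hy,
                Set.indicator_of_mem (show xt t + y ∈ B from hy)]
            · rw [Set.indicator_of_notMem hy,
                Set.indicator_of_notMem (show xt t + y ∉ B from hy)]
          rw [hI₀def, e1]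
          calc (∫ y, A.indicator (fun y => v (xt t + y)) y)
              = (∫ y, B.indicator v (xt t + y)) := by
                exact integral_congr_ae (Filter.Eventually.of_forall e2)
          _ = (∫ z, B.indicator v z) := integral_add_left_eq_self (B.indicator v) (xt t)
          _ = (∫ z in B, v z) := integral_indicator hBmeas
        linarith
      have hintpos : 0 < ∫ y in S, g y := lt_of_lt_of_le (by positivity) key
      have hlog : Real.log (C * I₀) ≤ Real.log (∫ y in S, g y) :=
        Real.log_le_log (by positivity) key
      have hlogC : Real.log (C * I₀) = -(ℓ : ℝ) / 2 * Real.log (2 * π * t)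
          + (-(K ^ 2 * c * t ^ a) / 2) + Real.log I₀ := by
        rw [Real.log_mul (ne_of_gt hCpos) (ne_of_gt hI₀pos), hCdef,
          Real.log_mul (by positivity) (ne_of_gt (Real.exp_pos _)),
          Real.log_rpow (by positivity), Real.log_exp]
      have hta : t ^ (-a) * t ^ a = 1 := by
        rw [← Real.rpow_add ht0]; simp
      have : h t = t ^ (-a) * Real.log (C * I₀) := by
        rw [hhdef, hlogC]
        have : t ^ (-a) * (-(K ^ 2 * c * t ^ a) / 2) = -(K ^ 2 * c / 2) := by
          calc t ^ (-a) * (-(K ^ 2 * c * t ^ a) / 2)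
              = (t ^ (-a) * t ^ a) * (-(K ^ 2 * c) / 2) := by ring
          _ = -(K ^ 2 * c / 2) := by rw [hta]; ring
        rw [mul_add, mul_add, this]
        ring
      rw [this]
      exact mul_le_mul_of_nonneg_left hlog (by positivity)
    · -- non-integrable case: integral is 0, log 0 = 0
      rw [integral_undef hig, Real.log_zero, mul_zero]
      exact hh0
  -- conclude via liminf
  set F : ℝ → ℝ := fun t : ℝ => t ^ (-a) * Real.log
      (∫ y in {y : (EuclideanSpace ℝ (Fin ℓ)) | ‖y‖ ≤ K * Real.sqrt c * t ^ ((a + 1) / 2)},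
        (2 * π * t) ^ (-(ℓ : ℝ) / 2) * Real.exp (-‖y‖ ^ 2 / (2 * t)) * u0 (xt t + y))
    with hFdef
  have hbdd : atTop.IsBoundedUnder (· ≥ ·) h := hhtend.isBoundedUnder_ge
  by_cases hcob : atTop.IsCoboundedUnder (· ≥ ·) F
  · calc -(K ^ 2 * c / 2) = liminf h atTop := hhtend.liminf_eq.symm
    _ ≤ liminf F atTop := liminf_le_liminf hev hbdd hcob
  · have heq : liminf F atTop = sSup {b : ℝ | ∀ᶠ t in atTop, b ≤ F t} := by
      rw [Filter.liminf_eq]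
    have hnb : ¬BddAbove {b : ℝ | ∀ᶠ t in atTop, b ≤ F t} := by
      intro hbd
      obtain ⟨b, hb⟩ := hbd
      apply hcob
      refine ⟨b, fun r hr => ?_⟩
      have : r ∈ {b : ℝ | ∀ᶠ t in atTop, b ≤ F t} := by
        rw [Set.mem_setOf_eq, ← Filter.eventually_map]
        exact hr
      exact hb this
    rw [ge_iff_le, heq, Real.sSup_of_not_bddAbove hnb]
    have : (0:ℝ) < K ^ 2 * c / 2 := by positivity
    linarith
end

section
/- Let η = K * K where K ∈ L²(ℝ^ℓ) is symmetric, and let ψ ∈ L²(ℝ) be symmetric and nonnegative with η0 = ψ * ψ. Then for any integer n ≥ 2, any t > 0, and any continuous paths B¹,…,Bⁿ : [0,t] → ℝ^ℓ, Σ_{1≤j≠k≤n} ∫₀^t∫₀^t η(B^j(s)−B^k(r)) η0((s−r)/t) ds dr ≤ (n−1) Σ_{j=1}^n ∫_{ℝ^{ℓ+1}} [ ∫₀^t ψ(u − s/t) K(x − B^j(s)) ds ]² du dx. -/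
open MeasureTheory Real
open scoped ENNReal NNReal

variable {ℓ : ℕ}

local notation "E" => EuclideanSpace ℝ (Fin ℓ)

lemma key_integrable (K : EuclideanSpace ℝ (Fin ℓ) → ℝ) (ψ : ℝ → ℝ)
    (hKm : StronglyMeasurable K) (hψm : StronglyMeasurable ψ)
    (hK2 : MemLp K 2 volume) (hψ2 : MemLp ψ 2 volume)
    (t : ℝ) (c d : ℝ → EuclideanSpace ℝ (Fin ℓ)) (hc : Continuous c) (hd : Continuous d) :
    Integrable (fun p : (ℝ × ℝ) × ℝ × EuclideanSpace ℝ (Fin ℓ) =>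
      (ψ (p.2.1 - p.1.1 / t) * K (p.2.2 - c p.1.1)) *
        (ψ (p.2.1 - p.1.2 / t) * K (p.2.2 - d p.1.2)))
      (((volume.restrict (Set.Ioc 0 t)).prod (volume.restrict (Set.Ioc 0 t))).prod
        (volume.prod volume)) := by
  have hmK : Measurable K := hKm.measurable
  have hmψ : Measurable ψ := hψm.measurable
  have m1 : Measurable fun p : (ℝ × ℝ) × ℝ × E => ψ (p.2.1 - p.1.1 / t) :=
    hmψ.comp ((measurable_snd.fst).sub ((measurable_fst.fst).div_const t))
  have m2 : Measurable fun p : (ℝ × ℝ) × ℝ × E => K (p.2.2 - c p.1.1) :=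
    hmK.comp ((measurable_snd.snd).sub (hc.measurable.comp measurable_fst.fst))
  have m3 : Measurable fun p : (ℝ × ℝ) × ℝ × E => ψ (p.2.1 - p.1.2 / t) :=
    hmψ.comp ((measurable_snd.fst).sub ((measurable_fst.snd).div_const t))
  have m4 : Measurable fun p : (ℝ × ℝ) × ℝ × E => K (p.2.2 - d p.1.2) :=
    hmK.comp ((measurable_snd.snd).sub (hd.measurable.comp measurable_fst.snd))
  have hmeas : Measurable fun p : (ℝ × ℝ) × ℝ × E =>
      (ψ (p.2.1 - p.1.1 / t) * K (p.2.2 - c p.1.1)) *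
        (ψ (p.2.1 - p.1.2 / t) * K (p.2.2 - d p.1.2)) := (m1.mul m2).mul (m3.mul m4)
  refine ⟨hmeas.aestronglyMeasurable, ?_⟩
  -- finiteness constants
  set Pψ : ℝ≥0∞ := ∫⁻ u, (‖ψ u‖₊ : ℝ≥0∞) ^ (2:ℝ) with hPψ
  set PK : ℝ≥0∞ := ∫⁻ x : E, (‖K x‖₊ : ℝ≥0∞) ^ (2:ℝ) with hPK
  have hPψ_lt : Pψ < ⊤ := by
    have := hψ2.eLpNorm_lt_top
    rw [eLpNorm_eq_lintegral_rpow_enorm_toReal (by norm_num) (by norm_num),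
      ENNReal.rpow_lt_top_iff_of_pos (by norm_num)] at this
    simp only [ENNReal.toReal_ofNat] at this
    exact this
  have hPK_lt : PK < ⊤ := by
    have := hK2.eLpNorm_lt_top
    rw [eLpNorm_eq_lintegral_rpow_enorm_toReal (by norm_num) (by norm_num),
      ENNReal.rpow_lt_top_iff_of_pos (by norm_num)] at this
    simp only [ENNReal.toReal_ofNat] at this
    exact this
  rw [hasFiniteIntegral_def]
  set μ2 := (volume.restrict (Set.Ioc (0:ℝ) t)).prod (volume.restrict (Set.Ioc (0:ℝ) t)) with hμ2
  set C : ℝ≥0∞ := (Pψ ^ (1/2 : ℝ) * Pψ ^ (1/2 : ℝ)) * (PK ^ (1/2 : ℝ) * PK ^ (1/2 : ℝ)) with hC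
  have hC_lt : C < ⊤ := by
    have h1 : Pψ ^ (1/2 : ℝ) < ⊤ := ENNReal.rpow_lt_top_of_nonneg (by norm_num) hPψ_lt.ne
    have h2 : PK ^ (1/2 : ℝ) < ⊤ := ENNReal.rpow_lt_top_of_nonneg (by norm_num) hPK_lt.ne
    exact ENNReal.mul_lt_top (ENNReal.mul_lt_top h1 h1) (ENNReal.mul_lt_top h2 h2)
  have conj : (2:ℝ).HolderConjugate 2 := ⟨by norm_num, by norm_num, by norm_num⟩
  have holder : ∀ {α : Type} [MeasurableSpace α] (ν : Measure α) (f g : α → ℝ)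
      (hf : Measurable f) (hg : Measurable g),
      ∫⁻ a, (‖f a‖₊ : ℝ≥0∞) * (‖g a‖₊ : ℝ≥0∞) ∂ν ≤
        (∫⁻ a, (‖f a‖₊ : ℝ≥0∞) ^ (2:ℝ) ∂ν) ^ (1/2 : ℝ) *
          (∫⁻ a, (‖g a‖₊ : ℝ≥0∞) ^ (2:ℝ) ∂ν) ^ (1/2 : ℝ) := by
    intro α _ ν f g hf hg
    exact ENNReal.lintegral_mul_le_Lp_mul_Lq ν conj
      (hf.nnnorm.coe_nnreal_ennreal.aemeasurable) (hg.nnnorm.coe_nnreal_ennreal.aemeasurable)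
  have hψtrans : ∀ a : ℝ, ∫⁻ u, (‖ψ (u - a)‖₊ : ℝ≥0∞) ^ (2:ℝ) = Pψ := fun a =>
    lintegral_sub_right_eq_self (fun u => (‖ψ u‖₊ : ℝ≥0∞) ^ (2:ℝ)) a
  have hKtrans : ∀ a : E, ∫⁻ x : E, (‖K (x - a)‖₊ : ℝ≥0∞) ^ (2:ℝ) = PK := fun a =>
    lintegral_sub_right_eq_self (fun x => (‖K x‖₊ : ℝ≥0∞) ^ (2:ℝ)) a
  calc ∫⁻ p, (‖(ψ (p.2.1 - p.1.1 / t) * K (p.2.2 - c p.1.1)) *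
          (ψ (p.2.1 - p.1.2 / t) * K (p.2.2 - d p.1.2))‖₊ : ℝ≥0∞) ∂(μ2.prod (volume.prod volume))
      = ∫⁻ sr, ∫⁻ z : ℝ × E, (‖(ψ (z.1 - sr.1 / t) * K (z.2 - c sr.1)) *
          (ψ (z.1 - sr.2 / t) * K (z.2 - d sr.2))‖₊ : ℝ≥0∞) ∂(volume.prod volume) ∂μ2 :=
        lintegral_prod _ (hmeas.nnnorm.coe_nnreal_ennreal.aemeasurable)
    _ ≤ ∫⁻ _ , C ∂μ2 := by
        refine lintegral_mono fun sr => ?_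
        have : ∀ z : ℝ × E, (‖(ψ (z.1 - sr.1 / t) * K (z.2 - c sr.1)) *
            (ψ (z.1 - sr.2 / t) * K (z.2 - d sr.2))‖₊ : ℝ≥0∞)
            = ((‖ψ (z.1 - sr.1 / t)‖₊ : ℝ≥0∞) * (‖ψ (z.1 - sr.2 / t)‖₊ : ℝ≥0∞)) *
              ((‖K (z.2 - c sr.1)‖₊ : ℝ≥0∞) * (‖K (z.2 - d sr.2)‖₊ : ℝ≥0∞)) := by
          intro z
          simp only [nnnorm_mul, ENNReal.coe_mul]
          ring
        have mψ1 : Measurable fun u : ℝ => ψ (u - sr.1 / t) := hmψ.comp (measurable_id.sub_const _)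
        have mψ2 : Measurable fun u : ℝ => ψ (u - sr.2 / t) := hmψ.comp (measurable_id.sub_const _)
        have mK1 : Measurable fun x : E => K (x - c sr.1) := hmK.comp (measurable_id.sub_const _)
        have mK2 : Measurable fun x : E => K (x - d sr.2) := hmK.comp (measurable_id.sub_const _)
        have e := lintegral_prod_mul (μ := (volume : Measure ℝ)) (ν := (volume : Measure E))
          (f := fun u => (‖ψ (u - sr.1 / t)‖₊ : ℝ≥0∞) * (‖ψ (u - sr.2 / t)‖₊ : ℝ≥0∞))
          (g := fun x => (‖K (x - c sr.1)‖₊ : ℝ≥0∞) * (‖K (x - d sr.2)‖₊ : ℝ≥0∞))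
          (mψ1.nnnorm.coe_nnreal_ennreal.mul mψ2.nnnorm.coe_nnreal_ennreal).aemeasurable
          (mK1.nnnorm.coe_nnreal_ennreal.mul mK2.nnnorm.coe_nnreal_ennreal).aemeasurable
        rw [lintegral_congr this, e]
        refine mul_le_mul' ?_ ?_
        · refine le_trans (holder volume _ _ mψ1 mψ2) ?_
          rw [hψtrans, hψtrans]
        · refine le_trans (holder volume _ _ mK1 mK2) ?_
          rw [hKtrans, hKtrans]
    _ = C * μ2 Set.univ := lintegral_const C
    _ < ⊤ := by
        have : μ2 Set.univ < ⊤ := by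
          rw [hμ2]
          exact measure_lt_top _ _
        exact ENNReal.mul_lt_top hC_lt this

lemma conv_eq {G : Type*} [NormedAddCommGroup G] [MeasurableSpace G] [BorelSpace G]
    (μ : Measure G) [μ.IsAddRightInvariant]
    (K : G → ℝ) (hs : ∀ z, K (-z) = K z) (a b : G) :
    ∫ x, K (x - a) * K (x - b) ∂μ = ∫ w, K (a - b - w) * K w ∂μ := by
  have h := integral_add_right_eq_self (μ := μ) (fun x => K (x - a) * K (x - b)) b
  rw [← h]
  congr 1; funext w
  rw [show w + b - a = -(a - b - w) by abel, hs, show w + b - b = w by abel]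


lemma sum_pair {n : ℕ} (S : Fin n → ℝ) :
    (∑ j : Fin n, ∑ k : Fin n, if j ≠ k then (S j + S k)/2 else 0)
      = ((n:ℝ) - 1) * ∑ j, S j := by
  have h1 : ∀ j : Fin n, (∑ k : Fin n, if j ≠ k then (S j + S k)/2 else 0)
      = ((n:ℝ) * S j + ∑ k, S k)/2 - S j := by
    intro j
    have e1 : (∑ k : Fin n, if j ≠ k then (S j + S k)/2 else 0)
        = ∑ k : Fin n, ((S j + S k)/2 - if j = k then (S j + S k)/2 else 0) :=
      Finset.sum_congr rfl fun k _ => by by_cases h : j = k <;> simp [h]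
    rw [e1, Finset.sum_sub_distrib, Finset.sum_ite_eq, ← Finset.sum_div,
      Finset.sum_add_distrib, Finset.sum_const, Finset.card_univ, Fintype.card_fin,
      nsmul_eq_mul]
    simp
  rw [Finset.sum_congr rfl fun j _ => h1 j, Finset.sum_sub_distrib, ← Finset.sum_div,
    Finset.sum_add_distrib, ← Finset.mul_sum, Finset.sum_const, Finset.card_univ,
    Fintype.card_fin, nsmul_eq_mul]
  ring

theorem core (n : ℕ)
    (K : E → ℝ) (ψ : ℝ → ℝ)
    (hKm : StronglyMeasurable K) (hψm : StronglyMeasurable ψ)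
    (hK2 : MemLp K 2 volume) (hKsymm : ∀ z, K (-z) = K z)
    (hψ2 : MemLp ψ 2 volume) (hψsymm : ∀ u, ψ (-u) = ψ u)
    (t : ℝ)
    (B : Fin n → ℝ → E) (hB : ∀ j, Continuous (B j)) :
    (∑ j : Fin n, ∑ k : Fin n,
      if j ≠ k then
        ∫ s in Set.Ioc (0:ℝ) t, ∫ r in Set.Ioc (0:ℝ) t,
          (∫ w, K (B j s - B k r - w) * K w) * (∫ v, ψ ((s - r) / t - v) * ψ v)
      else 0) ≤
    ((n : ℝ) - 1) * ∑ j : Fin n, ∫ u : ℝ, ∫ x : E,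
      (∫ s in Set.Ioc (0:ℝ) t, ψ (u - s / t) * K (x - B j s)) ^ 2 := by
  have Hint : ∀ j k : Fin n,
      Integrable (fun p : (ℝ × ℝ) × ℝ × E =>
        (ψ (p.2.1 - p.1.1 / t) * K (p.2.2 - B j p.1.1)) *
          (ψ (p.2.1 - p.1.2 / t) * K (p.2.2 - B k p.1.2)))
        (((volume.restrict (Set.Ioc 0 t)).prod (volume.restrict (Set.Ioc 0 t))).prod
          (volume.prod volume)) :=
    fun j k => key_integrable K ψ hKm hψm hK2 hψ2 t (B j) (B k) (hB j) (hB k)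
  set f : Fin n → ℝ × E → ℝ :=
    fun j z => ∫ s in Set.Ioc (0:ℝ) t, ψ (z.1 - s / t) * K (z.2 - B j s) with hfdef
  -- step 3 : sections over time
  have step3 : ∀ (j k : Fin n) (z : ℝ × E),
      (∫ sr : ℝ × ℝ, (ψ (z.1 - sr.1 / t) * K (z.2 - B j sr.1)) *
          (ψ (z.1 - sr.2 / t) * K (z.2 - B k sr.2))
        ∂((volume.restrict (Set.Ioc 0 t)).prod (volume.restrict (Set.Ioc 0 t))))
      = f j z * f k z := by
    intro j k z
    exact integral_prod_mul (f := fun s => ψ (z.1 - s / t) * K (z.2 - B j s))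
      (g := fun r => ψ (z.1 - r / t) * K (z.2 - B k r))
  -- integrability of products of f
  have Ifjk : ∀ j k : Fin n, Integrable (fun z => f j z * f k z) (volume.prod volume) := by
    intro j k
    have h2 := (Hint j k).swap.integral_prod_left
    exact h2.congr (Filter.Eventually.of_forall fun z => step3 j k z)
  have Ifsq : ∀ j : Fin n, Integrable (fun z => (f j z) ^ 2) (volume.prod volume) := by
    intro j
    exact (Ifjk j j).congr (Filter.Eventually.of_forall fun z =>
      (by ring : f j z * f j z = f j z ^ 2))
  -- key identity
  have key : ∀ j k : Fin n,
      (∫ s in Set.Ioc (0:ℝ) t, ∫ r in Set.Ioc (0:ℝ) t,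
          (∫ w, K (B j s - B k r - w) * K w) * (∫ v, ψ ((s - r) / t - v) * ψ v))
        = ∫ z : ℝ × E, f j z * f k z ∂(volume.prod volume) := by
    intro j k
    have point : ∀ s r : ℝ,
        (∫ w, K (B j s - B k r - w) * K w) * (∫ v, ψ ((s - r) / t - v) * ψ v)
          = ∫ z : ℝ × E, (ψ (z.1 - s / t) * K (z.2 - B j s)) *
              (ψ (z.1 - r / t) * K (z.2 - B k r)) ∂(volume.prod volume) := by
      intro s r
      have eK : (∫ w, K (B j s - B k r - w) * K w)
          = ∫ x : E, K (x - B j s) * K (x - B k r) :=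
        (conv_eq volume K hKsymm (B j s) (B k r)).symm
      have eψ : (∫ v, ψ ((s - r) / t - v) * ψ v)
          = ∫ u : ℝ, ψ (u - s / t) * ψ (u - r / t) := by
        rw [sub_div]
        exact (conv_eq volume ψ hψsymm (s / t) (r / t)).symm
      rw [eK, eψ, mul_comm, ← integral_prod_mul (f := fun u => ψ (u - s / t) * ψ (u - r / t))
        (g := fun x => K (x - B j s) * K (x - B k r))]
      congr 1
      funext z
      ring
    calc (∫ s in Set.Ioc (0:ℝ) t, ∫ r in Set.Ioc (0:ℝ) t,
            (∫ w, K (B j s - B k r - w) * K w) * (∫ v, ψ ((s - r) / t - v) * ψ v))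
        = ∫ s in Set.Ioc (0:ℝ) t, ∫ r in Set.Ioc (0:ℝ) t,
            ∫ z : ℝ × E, (ψ (z.1 - s / t) * K (z.2 - B j s)) *
              (ψ (z.1 - r / t) * K (z.2 - B k r)) ∂(volume.prod volume) := by
          simp_rw [point]
      _ = ∫ p : (ℝ × ℝ) × ℝ × E,
            (ψ (p.2.1 - p.1.1 / t) * K (p.2.2 - B j p.1.1)) *
              (ψ (p.2.1 - p.1.2 / t) * K (p.2.2 - B k p.1.2))
            ∂(((volume.restrict (Set.Ioc 0 t)).prod (volume.restrict (Set.Ioc 0 t))).prod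
              (volume.prod volume)) := by
          exact (integral_integral (Hint j k).integral_prod_left).trans
            (integral_prod _ (Hint j k)).symm
      _ = ∫ z : ℝ × E, f j z * f k z ∂(volume.prod volume) := by
          rw [integral_prod_symm _ (Hint j k)]
          exact integral_congr_ae (Filter.Eventually.of_forall fun z => step3 j k z)
  have pair_le : ∀ j k : Fin n,
      (∫ z : ℝ × E, f j z * f k z ∂(volume.prod volume))
        ≤ ((∫ z : ℝ × E, (f j z) ^ 2 ∂(volume.prod volume))
            + ∫ z : ℝ × E, (f k z) ^ 2 ∂(volume.prod volume)) / 2 := by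
    intro j k
    have h := integral_mono (Ifjk j k) (((Ifsq j).add (Ifsq k)).div_const 2)
      (fun z => by
        show f j z * f k z ≤ ((f j z) ^ 2 + (f k z) ^ 2) / 2
        nlinarith [sq_nonneg (f j z - f k z)])
    simp only [Pi.add_apply] at h
    rwa [integral_div, integral_add (Ifsq j) (Ifsq k)] at h
  have RHSj : ∀ j : Fin n,
      (∫ u : ℝ, ∫ x : E, (∫ s in Set.Ioc (0:ℝ) t, ψ (u - s / t) * K (x - B j s)) ^ 2)
        = ∫ z : ℝ × E, (f j z) ^ 2 ∂(volume.prod volume) := by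
    intro j
    exact (integral_integral
      (f := fun u x => (∫ s in Set.Ioc (0:ℝ) t, ψ (u - s / t) * K (x - B j s)) ^ 2)
      (Ifsq j)).trans (by rfl)
  calc (∑ j : Fin n, ∑ k : Fin n,
      if j ≠ k then
        ∫ s in Set.Ioc (0:ℝ) t, ∫ r in Set.Ioc (0:ℝ) t,
          (∫ w, K (B j s - B k r - w) * K w) * (∫ v, ψ ((s - r) / t - v) * ψ v)
      else 0)
      = ∑ j : Fin n, ∑ k : Fin n,
          if j ≠ k then (∫ z : ℝ × E, f j z * f k z ∂(volume.prod volume)) else 0 := by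
        refine Finset.sum_congr rfl fun j _ => Finset.sum_congr rfl fun k _ => ?_
        by_cases h : j = k
        · simp [h]
        · simp only [h, ne_eq, not_false_iff, if_true]
          exact key j k
    _ ≤ ∑ j : Fin n, ∑ k : Fin n,
          if j ≠ k then (((∫ z : ℝ × E, (f j z) ^ 2 ∂(volume.prod volume))
            + ∫ z : ℝ × E, (f k z) ^ 2 ∂(volume.prod volume)) / 2) else 0 := by
        refine Finset.sum_le_sum fun j _ => Finset.sum_le_sum fun k _ => ?_
        by_cases h : j = k
        · simp [h]
        · simpa [h] using pair_le j k
    _ = ((n:ℝ) - 1) * ∑ j : Fin n, ∫ z : ℝ × E, (f j z) ^ 2 ∂(volume.prod volume) :=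
        sum_pair _
    _ = ((n : ℝ) - 1) * ∑ j : Fin n, ∫ u : ℝ, ∫ x : E,
          (∫ s in Set.Ioc (0:ℝ) t, ψ (u - s / t) * K (x - B j s)) ^ 2 := by
        congr 1
        exact Finset.sum_congr rfl fun j _ => (RHSj j).symm

/-- With `η = K*K`, `η0 = ψ*ψ` (`K ∈ L²(ℝ^ℓ)`, `ψ ∈ L²(ℝ)` symmetric, `ψ ≥ 0`),
for continuous paths `B¹,…,Bⁿ`:
`Σ_{j≠k} ∫₀^t∫₀^t η(B^j(s)−B^k(r)) η0((s−r)/t) ds dr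
  ≤ (n−1) Σ_j ∫_{ℝ^{ℓ+1}} [∫₀^t ψ(u−s/t) K(x−B^j(s)) ds]² du dx`. -/
theorem stmt_15 (ℓ n : ℕ) (hn : 2 ≤ n)
    (K : EuclideanSpace ℝ (Fin ℓ) → ℝ) (ψ : ℝ → ℝ)
    (hK2 : MeasureTheory.MemLp K 2 volume) (hKsymm : ∀ z, K (-z) = K z)
    (hψ2 : MeasureTheory.MemLp ψ 2 volume) (hψsymm : ∀ u, ψ (-u) = ψ u)
    (hψnn : ∀ u, 0 ≤ ψ u)
    (t : ℝ) (ht : 0 < t)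
    (B : Fin n → ℝ → EuclideanSpace ℝ (Fin ℓ)) (hB : ∀ j, Continuous (B j)) :
    (∑ j : Fin n, ∑ k : Fin n,
      if j ≠ k then
        ∫ s in Set.Ioc (0:ℝ) t, ∫ r in Set.Ioc (0:ℝ) t,
          (∫ w, K (B j s - B k r - w) * K w) * (∫ v, ψ ((s - r) / t - v) * ψ v)
      else 0) ≤
    ((n : ℝ) - 1) * ∑ j : Fin n, ∫ u : ℝ, ∫ x : EuclideanSpace ℝ (Fin ℓ),
      (∫ s in Set.Ioc (0:ℝ) t, ψ (u - s / t) * K (x - B j s)) ^ 2 := by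
  classical
  have hKaesm := hK2.aestronglyMeasurable
  have hψaesm := hψ2.aestronglyMeasurable
  set Km : EuclideanSpace ℝ (Fin ℓ) → ℝ := hKaesm.mk K with hKmdef
  set ψm : ℝ → ℝ := hψaesm.mk ψ with hψmdef
  set K' : EuclideanSpace ℝ (Fin ℓ) → ℝ := fun z => (Km z + Km (-z)) / 2 with hK'def
  set ψ' : ℝ → ℝ := fun u => (ψm u + ψm (-u)) / 2 with hψ'def
  have hKms : StronglyMeasurable Km := hKaesm.stronglyMeasurable_mk
  have hψms : StronglyMeasurable ψm := hψaesm.stronglyMeasurable_mk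
  have hK'm : StronglyMeasurable K' := by
    have h := (hKms.add (hKms.comp_measurable measurable_neg)).mul
      (stronglyMeasurable_const (b := (2:ℝ)⁻¹))
    simp only [hK'def, div_eq_mul_inv]
    exact h
  have hψ'm : StronglyMeasurable ψ' := by
    have h := (hψms.add (hψms.comp_measurable measurable_neg)).mul
      (stronglyMeasurable_const (b := (2:ℝ)⁻¹))
    simp only [hψ'def, div_eq_mul_inv]
    exact h
  have hKe : K =ᵐ[volume] K' := by
    have h1 : K =ᵐ[volume] Km := hKaesm.ae_eq_mk
    have h2 : (fun z => Km (-z)) =ᵐ[volume] (fun z => K (-z)) :=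
      (Measure.measurePreserving_neg
        (volume : Measure (EuclideanSpace ℝ (Fin ℓ)))).quasiMeasurePreserving.ae_eq_comp h1.symm
    filter_upwards [h1, h2] with z e1 e2
    show K z = (Km z + Km (-z)) / 2
    rw [← e1, e2, hKsymm z]
    ring
  have hψe : ψ =ᵐ[volume] ψ' := by
    have h1 : ψ =ᵐ[volume] ψm := hψaesm.ae_eq_mk
    have h2 : (fun u => ψm (-u)) =ᵐ[volume] (fun u => ψ (-u)) :=
      (Measure.measurePreserving_neg
        (volume : Measure ℝ)).quasiMeasurePreserving.ae_eq_comp h1.symm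
    filter_upwards [h1, h2] with u e1 e2
    show ψ u = (ψm u + ψm (-u)) / 2
    rw [← e1, e2, hψsymm u]
    ring
  have hK'2 : MemLp K' 2 volume := hK2.ae_eq hKe
  have hψ'2 : MemLp ψ' 2 volume := hψ2.ae_eq hψe
  have hK'symm : ∀ z, K' (-z) = K' z := by
    intro z
    show (Km (-z) + Km (-(-z))) / 2 = (Km z + Km (-z)) / 2
    rw [neg_neg]; ring
  have hψ'symm : ∀ u, ψ' (-u) = ψ' u := by
    intro u
    show (ψm (-u) + ψm (-(-u))) / 2 = (ψm u + ψm (-u)) / 2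
    rw [neg_neg]; ring
  have eqK : ∀ a b : EuclideanSpace ℝ (Fin ℓ),
      (∫ w, K (a - b - w) * K w) = ∫ w, K' (a - b - w) * K' w := by
    intro a b
    refine integral_congr_ae ?_
    have h2 : (fun w => K (a - b - w)) =ᵐ[volume] fun w => K' (a - b - w) :=
      (Measure.measurePreserving_sub_left volume (a - b)).quasiMeasurePreserving.ae_eq_comp hKe
    exact h2.mul hKe
  have eqψ : ∀ c : ℝ, (∫ v, ψ (c - v) * ψ v) = ∫ v, ψ' (c - v) * ψ' v := by
    intro c
    refine integral_congr_ae ?_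
    have h2 : (fun v => ψ (c - v)) =ᵐ[volume] fun v => ψ' (c - v) :=
      (Measure.measurePreserving_sub_left volume c).quasiMeasurePreserving.ae_eq_comp hψe
    exact h2.mul hψe
  have eqRHS : ∀ j : Fin n,
      (∫ u : ℝ, ∫ x : EuclideanSpace ℝ (Fin ℓ),
        (∫ s in Set.Ioc (0:ℝ) t, ψ (u - s / t) * K (x - B j s)) ^ 2)
      = ∫ u : ℝ, ∫ x : EuclideanSpace ℝ (Fin ℓ),
        (∫ s in Set.Ioc (0:ℝ) t, ψ' (u - s / t) * K' (x - B j s)) ^ 2 := by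
    intro j
    set N : Set (EuclideanSpace ℝ (Fin ℓ)) := toMeasurable volume {z | ¬ K z = K' z} with hNdef
    have hNm : MeasurableSet N := measurableSet_toMeasurable _ _
    have hNnull : volume N = 0 := by
      rw [hNdef, measure_toMeasurable]
      exact ae_iff.mp hKe
    have hTm : MeasurableSet {p : ℝ × EuclideanSpace ℝ (Fin ℓ) | p.2 - B j p.1 ∈ N} :=
      (measurable_snd.sub ((hB j).measurable.comp measurable_fst)) hNm
    have hTnull : ((volume : Measure ℝ).prod
        (volume : Measure (EuclideanSpace ℝ (Fin ℓ))))
        {p : ℝ × EuclideanSpace ℝ (Fin ℓ) | p.2 - B j p.1 ∈ N} = 0 := by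
      rw [Measure.measure_prod_null hTm]
      refine Filter.Eventually.of_forall fun s => ?_
      have hpre : Prod.mk s ⁻¹' {p : ℝ × EuclideanSpace ℝ (Fin ℓ) | p.2 - B j p.1 ∈ N}
          = (fun x => x - B j s) ⁻¹' N := rfl
      show (volume : Measure (EuclideanSpace ℝ (Fin ℓ)))
          (Prod.mk s ⁻¹' {p : ℝ × EuclideanSpace ℝ (Fin ℓ) | p.2 - B j p.1 ∈ N}) = 0
      rw [hpre, (measurePreserving_sub_right
        (volume : Measure (EuclideanSpace ℝ (Fin ℓ))) (B j s)).measure_preimage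
        hNm.nullMeasurableSet]
      exact hNnull
    have hS'm : MeasurableSet {p : EuclideanSpace ℝ (Fin ℓ) × ℝ | p.1 - B j p.2 ∈ N} :=
      (measurable_fst.sub ((hB j).measurable.comp measurable_snd)) hNm
    have hS'null : ((volume : Measure (EuclideanSpace ℝ (Fin ℓ))).prod (volume : Measure ℝ))
        {p : EuclideanSpace ℝ (Fin ℓ) × ℝ | p.1 - B j p.2 ∈ N} = 0 := by
      rw [← Measure.prod_swap, Measure.map_apply measurable_swap hS'm]
      exact hTnull
    have hxae : ∀ᵐ x : EuclideanSpace ℝ (Fin ℓ) ∂volume,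
        (volume : Measure ℝ) {s : ℝ | x - B j s ∈ N} = 0 := by
      have h := (Measure.measure_prod_null hS'm).mp hS'null
      filter_upwards [h] with x hx
      exact hx
    have hψu : ∀ u : ℝ, ∀ᵐ s : ℝ ∂volume, ψ (u - s / t) = ψ' (u - s / t) := by
      intro u
      have h1 : Measure.QuasiMeasurePreserving (fun s : ℝ => s / t) volume volume := by
        refine ⟨measurable_id.div_const t, ?_⟩
        have he : (fun s : ℝ => s / t) = fun s : ℝ => t⁻¹ * s := by
          funext s; rw [div_eq_inv_mul]
        rw [he, Real.map_volume_mul_left (inv_ne_zero (ne_of_gt ht))]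
        exact Measure.smul_absolutelyContinuous
      exact ((Measure.measurePreserving_sub_left (volume : Measure ℝ)
        u).quasiMeasurePreserving.comp h1).ae_eq_comp hψe
    refine integral_congr_ae (Filter.Eventually.of_forall fun u => ?_)
    refine integral_congr_ae ?_
    filter_upwards [hxae] with x hx
    have hs2 : ∀ᵐ s : ℝ ∂volume, K (x - B j s) = K' (x - B j s) := by
      rw [ae_iff]
      refine measure_mono_null ?_ hx
      intro s hs
      exact subset_toMeasurable volume _ hs
    have hae : ∀ᵐ s : ℝ ∂(volume.restrict (Set.Ioc (0:ℝ) t)),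
        ψ (u - s / t) * K (x - B j s) = ψ' (u - s / t) * K' (x - B j s) := by
      refine ae_restrict_of_ae ?_
      filter_upwards [hψu u, hs2] with s e1 e2
      rw [e1, e2]
    rw [integral_congr_ae hae]
  have main := core n K' ψ' hK'm hψ'm hK'2 hK'symm hψ'2 hψ'symm t B hB
  calc (∑ j : Fin n, ∑ k : Fin n,
      if j ≠ k then
        ∫ s in Set.Ioc (0:ℝ) t, ∫ r in Set.Ioc (0:ℝ) t,
          (∫ w, K (B j s - B k r - w) * K w) * (∫ v, ψ ((s - r) / t - v) * ψ v)
      else 0)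
      = ∑ j : Fin n, ∑ k : Fin n,
        if j ≠ k then
          ∫ s in Set.Ioc (0:ℝ) t, ∫ r in Set.Ioc (0:ℝ) t,
            (∫ w, K' (B j s - B k r - w) * K' w) * (∫ v, ψ' ((s - r) / t - v) * ψ' v)
        else 0 := by
        refine Finset.sum_congr rfl fun j _ => Finset.sum_congr rfl fun k _ => ?_
        by_cases h : j = k
        · simp [h]
        · simp only [h, ne_eq, not_false_iff, if_true]
          refine integral_congr_ae (Filter.Eventually.of_forall fun s => ?_)
          refine integral_congr_ae (Filter.Eventually.of_forall fun r => ?_)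
          beta_reduce
          rw [eqK (B j s) (B k r), eqψ ((s - r) / t)]
    _ ≤ ((n : ℝ) - 1) * ∑ j : Fin n, ∫ u : ℝ, ∫ x : EuclideanSpace ℝ (Fin ℓ),
          (∫ s in Set.Ioc (0:ℝ) t, ψ' (u - s / t) * K' (x - B j s)) ^ 2 := main
    _ = ((n : ℝ) - 1) * ∑ j : Fin n, ∫ u : ℝ, ∫ x : EuclideanSpace ℝ (Fin ℓ),
          (∫ s in Set.Ioc (0:ℝ) t, ψ (u - s / t) * K (x - B j s)) ^ 2 := by
        congr 1
        exact Finset.sum_congr rfl fun j _ => (eqRHS j).symm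
end
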